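/- arXiv:2111.11433 — 3 statements merged into one kernel-verified Lean document; each statement's English description precedes it below -/
import Mathlib

section
/- Let A be a nonempty finite set and let (p_N)_{N≥1} be a consistent, stationary family of probability mass functions on finite words over A. Then the conditional-entropy sequence F_N = K_N − K_{N−1} (with K_0 = 0) converges, i.e. there exists a real number H such that F_N → H as N → ∞. -/
open Real Filter

/-- Block entropy `K_N = -∑_w p_N(w) log p_N(w)` with the conventions
`0 * log 0 = 0` (automatic since `Real.log 0 = 0`) and `K_0 = 0`. -/
noncomputable def blockEntropy {A : Type*} [Fintype A]
    (p : ∀ N : ℕ, (Fin N → A) → ℝ) (N : ℕ) : ℝ :=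
  if N = 0 then 0 else -∑ w : Fin N → A, p N w * Real.log (p N w)

/-- Conditional entropy sequence `F_N = K_N - K_{N-1}`. -/
noncomputable def condEntropySeq {A : Type*} [Fintype A]
    (p : ∀ N : ℕ, (Fin N → A) → ℝ) (N : ℕ) : ℝ :=
  blockEntropy p N - blockEntropy p (N - 1)

section Aux

variable {A : Type*} [Fintype A]

lemma sum_cons_decomp (n : ℕ) (f : (Fin (n+1) → A) → ℝ) :
    ∑ v : Fin (n+1) → A, f v = ∑ a : A, ∑ w : Fin n → A, f (Fin.cons a w) := by
  rw [← (Fin.consEquiv (fun _ => A)).sum_comp f, Fintype.sum_prod_type]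
  rfl

lemma sum_snoc_decomp (n : ℕ) (f : (Fin (n+1) → A) → ℝ) :
    ∑ v : Fin (n+1) → A, f v = ∑ w : Fin n → A, ∑ b : A, f (Fin.snoc w b) := by
  rw [← (Fin.snocEquiv (fun _ => A)).sum_comp f, Fintype.sum_prod_type, Finset.sum_comm]
  rfl

lemma blockEntropy_succ (p : ∀ N : ℕ, (Fin N → A) → ℝ) (N : ℕ) :
    blockEntropy p (N+1) = -∑ v : Fin (N+1) → A, p (N+1) v * Real.log (p (N+1) v) := by
  simp [blockEntropy]

lemma bE_pred [Nonempty A] (p : ∀ N : ℕ, (Fin N → A) → ℝ)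
    (hsum : ∀ N, 1 ≤ N → ∑ w : Fin N → A, p N w = 1)
    (hconsistent : ∀ N, 1 ≤ N → ∀ w : Fin N → A,
      ∑ a : A, p (N + 1) (Fin.snoc w a) = p N w) (M : ℕ) :
    blockEntropy p M = -∑ w : Fin M → A,
      (∑ b : A, p (M+1) (Fin.snoc w b)) * Real.log (∑ b : A, p (M+1) (Fin.snoc w b)) := by
  match M with
  | 0 =>
    have h1 : ∑ w : Fin 0 → A, ∑ b : A, p 1 (Fin.snoc w b) = 1 := by
      rw [← sum_snoc_decomp 0 (p 1)]; exact hsum 1 le_rfl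
    rw [Fintype.sum_unique] at h1
    have h0 : blockEntropy p 0 = 0 := by simp [blockEntropy]
    rw [h0, Fintype.sum_unique, h1]
    simp
  | (m+1) =>
    rw [blockEntropy_succ]
    congr 1
    refine Finset.sum_congr rfl fun w _ => ?_
    rw [hconsistent (m+1) (Nat.le_add_left 1 m) w]

lemma cons_snoc_comm {n : ℕ} (a : A) (w : Fin n → A) (b : A) :
    (Fin.cons a (Fin.snoc w b) : Fin (n+2) → A) = Fin.snoc (Fin.cons a w) b :=
  Fin.cons_snoc_eq_snoc_cons a w b

end Aux

section Main

variable {A : Type*} [Fintype A] [Nonempty A]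
variable (p : ∀ N : ℕ, (Fin N → A) → ℝ)
variable (hnonneg : ∀ N, 1 ≤ N → ∀ w : Fin N → A, 0 ≤ p N w)
variable (hsum : ∀ N, 1 ≤ N → ∑ w : Fin N → A, p N w = 1)
variable (hconsistent : ∀ N, 1 ≤ N → ∀ w : Fin N → A,
      ∑ a : A, p (N + 1) (Fin.snoc w a) = p N w)
variable (hstationary : ∀ N, 1 ≤ N → ∀ w : Fin N → A,
      ∑ a : A, p (N + 1) (Fin.cons a w) = p N w)

include hnonneg hsum hconsistent in
lemma condEntropySeq_nonneg (M : ℕ) : 0 ≤ condEntropySeq p (M+1) := by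
  have htn : ∀ (w : Fin M → A) (b : A), 0 ≤ p (M+1) (Fin.snoc w b) :=
    fun w b => hnonneg (M+1) (Nat.le_add_left 1 M) _
  have hK1 : blockEntropy p (M+1)
      = -∑ w : Fin M → A, ∑ b : A, p (M+1) (Fin.snoc w b) * Real.log (p (M+1) (Fin.snoc w b)) := by
    rw [blockEntropy_succ, sum_snoc_decomp]
  have hKM : blockEntropy p M = -∑ w : Fin M → A,
      (∑ b : A, p (M+1) (Fin.snoc w b)) * Real.log (∑ b : A, p (M+1) (Fin.snoc w b)) :=
    bE_pred p hsum hconsistent M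
  have key : condEntropySeq p (M+1)
      = ∑ w : Fin M → A, ∑ b : A, p (M+1) (Fin.snoc w b) *
          (Real.log (∑ c : A, p (M+1) (Fin.snoc w c)) - Real.log (p (M+1) (Fin.snoc w b))) := by
    have h : condEntropySeq p (M+1) = blockEntropy p (M+1) - blockEntropy p M := by
      simp [condEntropySeq]
    rw [h, hK1, hKM, neg_sub_neg, ← Finset.sum_sub_distrib]
    refine Finset.sum_congr rfl fun w _ => ?_
    rw [Finset.sum_mul, ← Finset.sum_sub_distrib]
    exact Finset.sum_congr rfl fun b _ => by ring
  rw [key]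
  refine Finset.sum_nonneg fun w _ => Finset.sum_nonneg fun b _ => ?_
  rcases (htn w b).eq_or_lt with h | h
  · rw [← h]; simp
  · have hrt : p (M+1) (Fin.snoc w b) ≤ ∑ c : A, p (M+1) (Fin.snoc w c) :=
      Finset.single_le_sum (fun c _ => htn w c) (Finset.mem_univ b)
    have hlog := Real.log_le_log h hrt
    exact mul_nonneg (htn w b) (by linarith)

include hnonneg hsum hconsistent hstationary in
lemma condEntropySeq_antitone_step (M : ℕ) :
    condEntropySeq p (M+2) ≤ condEntropySeq p (M+1) := by
  let q : A → (Fin M → A) → A → ℝ := fun a w b => p (M+2) (Fin.cons a (Fin.snoc w b))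
  let s : A → (Fin M → A) → ℝ := fun a w => p (M+1) (Fin.cons a w)
  let t : (Fin M → A) → A → ℝ := fun w b => p (M+1) (Fin.snoc w b)
  let r : (Fin M → A) → ℝ := fun w => ∑ b : A, t w b
  have hM1 : 1 ≤ M + 1 := Nat.le_add_left 1 M
  have hqn : ∀ a w b, 0 ≤ q a w b := fun a w b => hnonneg (M+2) (by omega) _
  have hsn : ∀ a w, 0 ≤ s a w := fun a w => hnonneg (M+1) hM1 _
  have htn : ∀ w b, 0 ≤ t w b := fun w b => hnonneg (M+1) hM1 _
  have hrn : ∀ w, 0 ≤ r w := fun w => Finset.sum_nonneg fun b _ => htn w b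
  -- marginals
  have f1 : ∀ a w, ∑ b : A, q a w b = s a w := by
    intro a w
    have hc := hconsistent (M+1) hM1 (Fin.cons a w)
    calc ∑ b : A, q a w b
        = ∑ b : A, p (M+1+1) (Fin.snoc (Fin.cons a w) b) :=
          Finset.sum_congr rfl fun b _ => by
            show p (M+2) (Fin.cons a (Fin.snoc w b)) = _
            rw [cons_snoc_comm]
      _ = s a w := hc
  have f2 : ∀ w b, ∑ a : A, q a w b = t w b := fun w b =>
    hstationary (M+1) hM1 (Fin.snoc w b)
  have hsr : ∀ w, ∑ a : A, s a w = r w := by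
    intro w
    calc ∑ a : A, s a w
        = ∑ a : A, ∑ b : A, q a w b := Finset.sum_congr rfl fun a _ => (f1 a w).symm
      _ = ∑ b : A, ∑ a : A, q a w b := Finset.sum_comm
      _ = ∑ b : A, t w b := Finset.sum_congr rfl fun b _ => f2 w b
      _ = r w := rfl
  -- entropy formulas
  have hK2 : blockEntropy p (M+2)
      = -∑ a : A, ∑ w : Fin M → A, ∑ b : A, q a w b * Real.log (q a w b) := by
    rw [blockEntropy_succ, sum_cons_decomp]
    congr 1
    exact Finset.sum_congr rfl fun a _ =>
      sum_snoc_decomp M (fun u => p (M+2) (Fin.cons a u) * Real.log (p (M+2) (Fin.cons a u)))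
  have hK1c : blockEntropy p (M+1)
      = -∑ a : A, ∑ w : Fin M → A, s a w * Real.log (s a w) := by
    rw [blockEntropy_succ, sum_cons_decomp]
  have hK1s : blockEntropy p (M+1)
      = -∑ w : Fin M → A, ∑ b : A, t w b * Real.log (t w b) := by
    rw [blockEntropy_succ, sum_snoc_decomp]
  have hKM : blockEntropy p M = -∑ w : Fin M → A, r w * Real.log (r w) :=
    bE_pred p hsum hconsistent M
  -- rewriting the marginal entropies as triple sums
  have e_s : ∑ a : A, ∑ w : Fin M → A, s a w * Real.log (s a w)
      = ∑ a : A, ∑ w : Fin M → A, ∑ b : A, q a w b * Real.log (s a w) := by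
    refine Finset.sum_congr rfl fun a _ => Finset.sum_congr rfl fun w _ => ?_
    rw [← f1 a w, Finset.sum_mul]
  have e_t : ∑ w : Fin M → A, ∑ b : A, t w b * Real.log (t w b)
      = ∑ a : A, ∑ w : Fin M → A, ∑ b : A, q a w b * Real.log (t w b) := by
    calc ∑ w : Fin M → A, ∑ b : A, t w b * Real.log (t w b)
        = ∑ w : Fin M → A, ∑ b : A, ∑ a : A, q a w b * Real.log (t w b) := by
          refine Finset.sum_congr rfl fun w _ => Finset.sum_congr rfl fun b _ => ?_
          rw [← f2 w b, Finset.sum_mul]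
      _ = ∑ w : Fin M → A, ∑ a : A, ∑ b : A, q a w b * Real.log (t w b) :=
          Finset.sum_congr rfl fun w _ => Finset.sum_comm
      _ = ∑ a : A, ∑ w : Fin M → A, ∑ b : A, q a w b * Real.log (t w b) :=
          Finset.sum_comm
  have e_r : ∑ w : Fin M → A, r w * Real.log (r w)
      = ∑ a : A, ∑ w : Fin M → A, ∑ b : A, q a w b * Real.log (r w) := by
    calc ∑ w : Fin M → A, r w * Real.log (r w)
        = ∑ w : Fin M → A, ∑ a : A, ∑ b : A, q a w b * Real.log (r w) := by
          refine Finset.sum_congr rfl fun w _ => ?_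
          rw [← hsr w, Finset.sum_mul]
          exact Finset.sum_congr rfl fun a _ => by rw [← f1 a w, Finset.sum_mul]
      _ = ∑ a : A, ∑ w : Fin M → A, ∑ b : A, q a w b * Real.log (r w) :=
          Finset.sum_comm
  -- the key identity
  have key : (blockEntropy p (M+2) - blockEntropy p (M+1))
        - (blockEntropy p (M+1) - blockEntropy p M)
      = ∑ a : A, ∑ w : Fin M → A, ∑ b : A, q a w b *
          (Real.log (s a w) + Real.log (t w b) - Real.log (q a w b) - Real.log (r w)) := by
    have lhs_eq : (blockEntropy p (M+2) - blockEntropy p (M+1))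
          - (blockEntropy p (M+1) - blockEntropy p M)
        = (∑ a : A, ∑ w : Fin M → A, s a w * Real.log (s a w))
          + (∑ w : Fin M → A, ∑ b : A, t w b * Real.log (t w b))
          - (∑ a : A, ∑ w : Fin M → A, ∑ b : A, q a w b * Real.log (q a w b))
          - (∑ w : Fin M → A, r w * Real.log (r w)) := by
      linear_combination hK2 - hK1c - hK1s + hKM
    rw [lhs_eq, e_s, e_t, e_r]
    simp only [mul_add, mul_sub, Finset.sum_add_distrib, Finset.sum_sub_distrib]
  -- pointwise bound
  have pointwise : ∀ a w b, q a w b *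
        (Real.log (s a w) + Real.log (t w b) - Real.log (q a w b) - Real.log (r w))
      ≤ s a w * t w b / r w - q a w b := by
    intro a w b
    rcases (hqn a w b).eq_or_lt with h | hq
    · rw [← h]
      simp only [zero_mul, sub_zero]
      exact div_nonneg (mul_nonneg (hsn a w) (htn w b)) (hrn w)
    · have hs : 0 < s a w := lt_of_lt_of_le hq (by
        rw [← f1 a w]; exact Finset.single_le_sum (fun b _ => hqn a w b) (Finset.mem_univ b))
      have ht : 0 < t w b := lt_of_lt_of_le hq (by
        rw [← f2 w b]; exact Finset.single_le_sum (fun a _ => hqn a w b) (Finset.mem_univ a))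
      have hrpos : 0 < r w := lt_of_lt_of_le ht
        (Finset.single_le_sum (fun b _ => htn w b) (Finset.mem_univ b))
      have hmpos : (0:ℝ) < s a w * t w b / r w := div_pos (mul_pos hs ht) hrpos
      have hlog := Real.log_le_sub_one_of_pos (div_pos hmpos hq)
      rw [Real.log_div hmpos.ne' hq.ne', Real.log_div (mul_pos hs ht).ne' hrpos.ne',
        Real.log_mul hs.ne' ht.ne'] at hlog
      have h2 : Real.log (s a w) + Real.log (t w b) - Real.log (q a w b) - Real.log (r w)
          ≤ s a w * t w b / r w / q a w b - 1 := by linarith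
      calc q a w b * (Real.log (s a w) + Real.log (t w b) - Real.log (q a w b) - Real.log (r w))
          ≤ q a w b * (s a w * t w b / r w / q a w b - 1) :=
            mul_le_mul_of_nonneg_left h2 hq.le
        _ = s a w * t w b / r w - q a w b := by
            field_simp
  -- the sum of the upper bounds is zero
  have hz : ∑ a : A, ∑ w : Fin M → A, ∑ b : A, (s a w * t w b / r w - q a w b) = 0 := by
    simp only [Finset.sum_sub_distrib]
    rw [sub_eq_zero]
    have left : ∑ a : A, ∑ w : Fin M → A, ∑ b : A, s a w * t w b / r w
        = ∑ w : Fin M → A, r w := by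
      rw [Finset.sum_comm]
      refine Finset.sum_congr rfl fun w _ => ?_
      calc ∑ a : A, ∑ b : A, s a w * t w b / r w
          = ∑ a : A, s a w * r w / r w := by
            refine Finset.sum_congr rfl fun a _ => ?_
            rw [← Finset.sum_div, ← Finset.mul_sum]
        _ = (∑ a : A, s a w) * r w / r w := by rw [← Finset.sum_div, ← Finset.sum_mul]
        _ = r w * r w / r w := by rw [hsr w]
        _ = r w := by
            rcases eq_or_ne (r w) 0 with h | h
            · simp [h]
            · field_simp
    have right : ∑ a : A, ∑ w : Fin M → A, ∑ b : A, q a w b = ∑ w : Fin M → A, r w := by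
      rw [Finset.sum_comm]
      refine Finset.sum_congr rfl fun w _ => ?_
      calc ∑ a : A, ∑ b : A, q a w b
          = ∑ b : A, ∑ a : A, q a w b := Finset.sum_comm
        _ = ∑ b : A, t w b := Finset.sum_congr rfl fun b _ => f2 w b
        _ = r w := rfl
    rw [left, right]
  -- conclude
  have hle : (blockEntropy p (M+2) - blockEntropy p (M+1))
      - (blockEntropy p (M+1) - blockEntropy p M) ≤ 0 := by
    rw [key, ← hz]
    exact Finset.sum_le_sum fun a _ => Finset.sum_le_sum fun w _ =>
      Finset.sum_le_sum fun b _ => pointwise a w b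
  have h1 : condEntropySeq p (M+2) = blockEntropy p (M+2) - blockEntropy p (M+1) := by
    simp [condEntropySeq]
  have h2 : condEntropySeq p (M+1) = blockEntropy p (M+1) - blockEntropy p M := by
    simp [condEntropySeq]
  linarith

end Main

/-- For a consistent, stationary family of probability mass functions on words
over a nonempty finite alphabet, the conditional-entropy sequence
`F_N = K_N - K_{N-1}` converges. -/
theorem condEntropySeq_converges {A : Type*} [Fintype A] [Nonempty A]
    (p : ∀ N : ℕ, (Fin N → A) → ℝ)
    (hnonneg : ∀ N, 1 ≤ N → ∀ w : Fin N → A, 0 ≤ p N w)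
    (hsum : ∀ N, 1 ≤ N → ∑ w : Fin N → A, p N w = 1)
    (hconsistent : ∀ N, 1 ≤ N → ∀ w : Fin N → A,
      ∑ a : A, p (N + 1) (Fin.snoc w a) = p N w)
    (hstationary : ∀ N, 1 ≤ N → ∀ w : Fin N → A,
      ∑ a : A, p (N + 1) (Fin.cons a w) = p N w) :
    ∃ H : ℝ, Tendsto (fun N => condEntropySeq p N) atTop (nhds H) := by
  set g : ℕ → ℝ := fun n => condEntropySeq p (n+1) with hg
  have hanti : Antitone g := antitone_nat_of_succ_le fun n =>
    condEntropySeq_antitone_step p hnonneg hsum hconsistent hstationary n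
  have hbdd : BddBelow (Set.range g) := ⟨0, by
    rintro x ⟨n, rfl⟩
    exact condEntropySeq_nonneg p hnonneg hsum hconsistent n⟩
  have hg_tendsto : Tendsto g atTop (nhds (⨅ n, g n)) :=
    tendsto_atTop_ciInf hanti hbdd
  refine ⟨⨅ n, g n, ?_⟩
  have hcomp : Tendsto (fun n => g (n - 1)) atTop (nhds (⨅ n, g n)) :=
    hg_tendsto.comp (tendsto_sub_atTop_nat 1)
  refine hcomp.congr' ?_
  filter_upwards [eventually_ge_atTop 1] with n hn
  rw [hg]
  simp only []
  congr 1
  omega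
end

section
/- Let A be a nonempty finite set and let (p_N)_{N≥1} be a consistent, stationary family of probability mass functions on finite words over A. Then the conditional-entropy sequence F_N = K_N − K_{N−1} is monotonically nonincreasing: for every N ≥ 1, F_{N+1} ≤ F_N. -/
open Real


lemma myInitCons {β : Type*} {n : ℕ} (x : β) (u : Fin (n+1) → β) :
    Fin.init (Fin.cons x u : Fin (n+2) → β) = Fin.cons x (Fin.init u) := by
  funext i
  cases i using Fin.cases with
  | zero => simp [Fin.init]
  | succ j => simp only [Fin.init, Fin.cons_succ, ← Fin.succ_castSucc]

def snocE (A : Type*) (n : ℕ) : ((Fin n → A) × A) ≃ (Fin (n+1) → A) where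
  toFun p := Fin.snoc p.1 p.2
  invFun w := (Fin.init w, w (Fin.last n))
  left_inv p := by simp
  right_inv w := by simp

def consE (A : Type*) (n : ℕ) : (A × (Fin n → A)) ≃ (Fin (n+1) → A) where
  toFun p := Fin.cons p.1 p.2
  invFun w := (w 0, Fin.tail w)
  left_inv p := by simp
  right_inv w := by simp [Fin.cons_self_tail]

lemma sum_snoc_eq {A : Type*} [Fintype A] {n : ℕ} (g : (Fin (n+1) → A) → ℝ) :
    ∑ w, g w = ∑ u : Fin n → A, ∑ z : A, g (Fin.snoc u z) := by
  rw [← Equiv.sum_comp (snocE A n) g, Fintype.sum_prod_type]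
  rfl

lemma sum_cons_eq {A : Type*} [Fintype A] {n : ℕ} (g : (Fin (n+1) → A) → ℝ) :
    ∑ w, g w = ∑ u : Fin n → A, ∑ x : A, g (Fin.cons x u) := by
  rw [← Equiv.sum_comp (consE A n) g, Fintype.sum_prod_type, Finset.sum_comm]
  rfl

lemma gibbs {ι : Type*} [Fintype ι] (q r : ι → ℝ) (hq : ∀ i, 0 ≤ q i) (hr : ∀ i, 0 ≤ r i)
    (hz : ∀ i, r i = 0 → q i = 0) (hle : ∑ i, r i ≤ ∑ i, q i) :
    ∑ i, q i * Real.log (r i) ≤ ∑ i, q i * Real.log (q i) := by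
  have key : ∀ i, q i * Real.log (r i) - q i * Real.log (q i) ≤ r i - q i := by
    intro i
    rcases eq_or_lt_of_le (hq i) with h | h
    · simpa [← h] using hr i
    · have hri : 0 < r i := lt_of_le_of_ne (hr i) fun e => by
        have := hz i e.symm; exact absurd this.symm h.ne
      have h2 : Real.log (r i) - Real.log (q i) ≤ r i / q i - 1 := by
        rw [← Real.log_div hri.ne' h.ne']
        exact Real.log_le_sub_one_of_pos (div_pos hri h)
      calc q i * Real.log (r i) - q i * Real.log (q i)
          = q i * (Real.log (r i) - Real.log (q i)) := by ring
        _ ≤ q i * (r i / q i - 1) := by exact mul_le_mul_of_nonneg_left h2 h.le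
        _ = r i - q i := by rw [mul_sub, mul_div_cancel₀ _ h.ne', mul_one]
  have h1 : ∑ i, (q i * Real.log (r i) - q i * Real.log (q i)) ≤ ∑ i, (r i - q i) :=
    Finset.sum_le_sum fun i _ => key i
  rw [Finset.sum_sub_distrib, Finset.sum_sub_distrib] at h1
  linarith

/-- For a consistent, stationary family of probability mass functions on words
over a nonempty finite alphabet, the conditional-entropy sequence
`F_N = K_N - K_{N-1}` is monotonically nonincreasing: `F_{N+1} ≤ F_N` for every `N ≥ 1`. -/
theorem condEntropySeq_antitone {A : Type*} [Fintype A] [Nonempty A]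
    (p : ∀ N : ℕ, (Fin N → A) → ℝ)
    (hnonneg : ∀ N, 1 ≤ N → ∀ w : Fin N → A, 0 ≤ p N w)
    (hsum : ∀ N, 1 ≤ N → ∑ w : Fin N → A, p N w = 1)
    (hconsistent : ∀ N, 1 ≤ N → ∀ w : Fin N → A,
      ∑ a : A, p (N + 1) (Fin.snoc w a) = p N w)
    (hstationary : ∀ N, 1 ≤ N → ∀ w : Fin N → A,
      ∑ a : A, p (N + 1) (Fin.cons a w) = p N w) :
    ∀ N : ℕ, 1 ≤ N → condEntropySeq p (N + 1) ≤ condEntropySeq p N := by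
  intro N hN
  obtain ⟨M, rfl⟩ : ∃ M, N = M + 1 := ⟨N - 1, (Nat.succ_pred_eq_of_pos hN).symm⟩
  classical
  -- base marginal at level M (with the convention that level 0 is constant 1)
  set P0 : (Fin M → A) → ℝ := if M = 0 then fun _ => 1 else p M with hP0def
  have hP0nn : ∀ v, 0 ≤ P0 v := by
    intro v; by_cases hM : M = 0
    · simp [hP0def, hM]
    · simp only [hP0def, if_neg hM]; exact hnonneg M (by omega) v
  have hS : ∀ v : Fin M → A, ∑ x : A, p (M+1) (Fin.cons x v) = P0 v := by
    intro v; by_cases hM : M = 0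
    · subst hM
      have h1 : ∀ x : A, Fin.cons x v = fun _ : Fin 1 => x := by
        intro x; funext i
        rw [Fin.fin_one_eq_zero i, Fin.cons_zero]
      rw [show P0 v = 1 from by simp [hP0def], Finset.sum_congr rfl fun x _ => by rw [h1 x],
        ← hsum 1 le_rfl]
      exact Fintype.sum_equiv (Equiv.funUnique (Fin 1) A).symm _ _ fun x => rfl
    · simp only [hP0def, if_neg hM]; exact hstationary M (by omega) v
  have hC : ∀ v : Fin M → A, ∑ z : A, p (M+1) (Fin.snoc v z) = P0 v := by
    intro v; by_cases hM : M = 0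
    · subst hM
      have h1 : ∀ z : A, (Fin.snoc v z : Fin 1 → A) = fun _ : Fin 1 => z := by
        intro z; funext i
        rw [Fin.fin_one_eq_zero i, show (0 : Fin 1) = Fin.last 0 from rfl, Fin.snoc_last]
      rw [show P0 v = 1 from by simp [hP0def], Finset.sum_congr rfl fun z _ => by rw [h1 z],
        ← hsum 1 le_rfl]
      exact Fintype.sum_equiv (Equiv.funUnique (Fin 1) A).symm _ _ fun x => rfl
    · simp only [hP0def, if_neg hM]; exact hconsistent M (by omega) v
  have hq : ∀ w : Fin (M+2) → A, 0 ≤ p (M+2) w := hnonneg (M+2) (by omega)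
  have hp1 : ∀ u : Fin (M+1) → A, 0 ≤ p (M+1) u := hnonneg (M+1) (by omega)
  have ha : ∀ w : Fin (M+2) → A, p (M+2) w ≤ p (M+1) (Fin.init w) := by
    intro w
    have h := Finset.single_le_sum (f := fun z => p (M+2) (Fin.snoc (Fin.init w) z))
      (fun z _ => hq _) (Finset.mem_univ (w (Fin.last (M+1))))
    rw [Fin.snoc_init_self] at h
    rw [← hconsistent (M+1) (by omega) (Fin.init w)]
    exact h
  have hb : ∀ w : Fin (M+2) → A, p (M+2) w ≤ p (M+1) (Fin.tail w) := by
    intro w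
    have h := Finset.single_le_sum (f := fun x => p (M+2) (Fin.cons x (Fin.tail w)))
      (fun x _ => hq _) (Finset.mem_univ (w 0))
    rw [Fin.cons_self_tail] at h
    rw [← hstationary (M+1) (by omega) (Fin.tail w)]
    exact h
  have hbc : ∀ u : Fin (M+1) → A, p (M+1) u ≤ P0 (Fin.init u) := by
    intro u
    have h := Finset.single_le_sum (f := fun z => p (M+1) (Fin.snoc (Fin.init u) z))
      (fun z _ => hp1 _) (Finset.mem_univ (u (Fin.last M)))
    rw [Fin.snoc_init_self] at h
    rw [← hC (Fin.init u)]
    exact h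
  -- the reference density
  set r : (Fin (M+2) → A) → ℝ :=
    fun w => p (M+1) (Fin.init w) * p (M+1) (Fin.tail w) / P0 (Fin.init (Fin.tail w))
    with hrdef
  have hrn : ∀ w, 0 ≤ r w := fun w =>
    div_nonneg (mul_nonneg (hp1 _) (hp1 _)) (hP0nn _)
  have hrz : ∀ w, r w = 0 → p (M+2) w = 0 := by
    intro w h
    by_contra hqw
    have hq0 : 0 < p (M+2) w := (hq w).lt_of_ne (Ne.symm hqw)
    have hb0 : 0 < p (M+1) (Fin.tail w) := lt_of_lt_of_le hq0 (hb w)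
    have : 0 < r w := div_pos (mul_pos (lt_of_lt_of_le hq0 (ha w)) hb0)
      (lt_of_lt_of_le hb0 (hbc (Fin.tail w)))
    exact absurd h this.ne'
  -- sum of r equals 1
  have hsumr : ∑ w, r w = 1 := by
    rw [sum_cons_eq r]
    have hstep : ∀ u : Fin (M+1) → A, ∑ x : A, r (Fin.cons x u) = p (M+1) u := by
      intro u
      have h1 : ∀ x : A, r (Fin.cons x u)
          = p (M+1) (Fin.cons x (Fin.init u)) * (p (M+1) u / P0 (Fin.init u)) := by
        intro x
        rw [hrdef]
        simp only [Fin.tail_cons, myInitCons]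
        ring
      rw [Finset.sum_congr rfl fun x _ => h1 x, ← Finset.sum_mul, hS (Fin.init u)]
      by_cases hc0 : P0 (Fin.init u) = 0
      · have h0 : p (M+1) u = 0 := le_antisymm (hc0 ▸ hbc u) (hp1 u)
        rw [hc0, h0]; simp
      · field_simp
    rw [Finset.sum_congr rfl fun u _ => hstep u]
    exact hsum (M+1) (by omega)
  -- Gibbs inequality
  have hgibbs : ∑ w : Fin (M+2) → A, p (M+2) w * Real.log (r w)
      ≤ ∑ w : Fin (M+2) → A, p (M+2) w * Real.log (p (M+2) w) := by
    apply gibbs (p (M+2)) r hq hrn hrz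
    rw [hsumr, hsum (M+2) (by omega)]
  -- split the log
  have hlog : ∀ w : Fin (M+2) → A, p (M+2) w * Real.log (r w)
      = p (M+2) w * Real.log (p (M+1) (Fin.init w))
        + p (M+2) w * Real.log (p (M+1) (Fin.tail w))
        - p (M+2) w * Real.log (P0 (Fin.init (Fin.tail w))) := by
    intro w
    by_cases hqw : p (M+2) w = 0
    · simp [hqw]
    · have hq0 : 0 < p (M+2) w := (hq w).lt_of_ne (Ne.symm hqw)
      have ha0 : 0 < p (M+1) (Fin.init w) := lt_of_lt_of_le hq0 (ha w)
      have hb0 : 0 < p (M+1) (Fin.tail w) := lt_of_lt_of_le hq0 (hb w)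
      have hc0 : 0 < P0 (Fin.init (Fin.tail w)) := lt_of_lt_of_le hb0 (hbc (Fin.tail w))
      rw [hrdef]
      simp only
      rw [Real.log_div (mul_pos ha0 hb0).ne' hc0.ne', Real.log_mul ha0.ne' hb0.ne']
      ring
  -- the three marginal sums
  have T1 : ∑ w : Fin (M+2) → A, p (M+2) w * Real.log (p (M+1) (Fin.init w))
      = ∑ u : Fin (M+1) → A, p (M+1) u * Real.log (p (M+1) u) := by
    rw [sum_snoc_eq (fun w => p (M+2) w * Real.log (p (M+1) (Fin.init w)))]
    apply Finset.sum_congr rfl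
    intro u _
    have h1 : ∀ z : A,
        p (M+2) (Fin.snoc u z) * Real.log (p (M+1) (Fin.init (Fin.snoc u z : Fin (M+2) → A)))
        = p (M+2) (Fin.snoc u z) * Real.log (p (M+1) u) := by
      intro z; rw [Fin.init_snoc]
    rw [Finset.sum_congr rfl fun z _ => h1 z, ← Finset.sum_mul,
      hconsistent (M+1) (by omega) u]
  have T2 : ∑ w : Fin (M+2) → A, p (M+2) w * Real.log (p (M+1) (Fin.tail w))
      = ∑ u : Fin (M+1) → A, p (M+1) u * Real.log (p (M+1) u) := by
    rw [sum_cons_eq (fun w => p (M+2) w * Real.log (p (M+1) (Fin.tail w)))]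
    apply Finset.sum_congr rfl
    intro u _
    have h1 : ∀ x : A,
        p (M+2) (Fin.cons x u) * Real.log (p (M+1) (Fin.tail (Fin.cons x u : Fin (M+2) → A)))
        = p (M+2) (Fin.cons x u) * Real.log (p (M+1) u) := by
      intro x; rw [Fin.tail_cons]
    rw [Finset.sum_congr rfl fun x _ => h1 x, ← Finset.sum_mul,
      hstationary (M+1) (by omega) u]
  have T3 : ∑ w : Fin (M+2) → A, p (M+2) w * Real.log (P0 (Fin.init (Fin.tail w)))
      = ∑ v : Fin M → A, P0 v * Real.log (P0 v) := by
    rw [sum_cons_eq (fun w => p (M+2) w * Real.log (P0 (Fin.init (Fin.tail w))))]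
    have h1 : ∀ u : Fin (M+1) → A,
        ∑ x : A, p (M+2) (Fin.cons x u)
          * Real.log (P0 (Fin.init (Fin.tail (Fin.cons x u : Fin (M+2) → A))))
        = p (M+1) u * Real.log (P0 (Fin.init u)) := by
      intro u
      have h2 : ∀ x : A, p (M+2) (Fin.cons x u)
          * Real.log (P0 (Fin.init (Fin.tail (Fin.cons x u : Fin (M+2) → A))))
          = p (M+2) (Fin.cons x u) * Real.log (P0 (Fin.init u)) := by
        intro x; rw [Fin.tail_cons]
      rw [Finset.sum_congr rfl fun x _ => h2 x, ← Finset.sum_mul,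
        hstationary (M+1) (by omega) u]
    rw [Finset.sum_congr rfl fun u _ => h1 u]
    rw [sum_snoc_eq (fun u => p (M+1) u * Real.log (P0 (Fin.init u)))]
    apply Finset.sum_congr rfl
    intro v _
    have h3 : ∀ z : A,
        p (M+1) (Fin.snoc v z) * Real.log (P0 (Fin.init (Fin.snoc v z : Fin (M+1) → A)))
        = p (M+1) (Fin.snoc v z) * Real.log (P0 v) := by
      intro z; rw [Fin.init_snoc]
    rw [Finset.sum_congr rfl fun z _ => h3 z, ← Finset.sum_mul, hC v]
  -- assemble
  rw [Finset.sum_congr rfl fun w _ => hlog w, Finset.sum_sub_distrib,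
    Finset.sum_add_distrib, T1, T2, T3] at hgibbs
  have hB2 : blockEntropy p (M+2) = -∑ w : Fin (M+2) → A, p (M+2) w * Real.log (p (M+2) w) := by
    rw [blockEntropy, if_neg (by omega)]
  have hB1 : blockEntropy p (M+1) = -∑ u : Fin (M+1) → A, p (M+1) u * Real.log (p (M+1) u) := by
    rw [blockEntropy, if_neg (by omega)]
  have hB0 : blockEntropy p M = -∑ v : Fin M → A, P0 v * Real.log (P0 v) := by
    by_cases hM : M = 0
    · subst hM
      rw [blockEntropy, if_pos rfl]
      simp [hP0def]
    · rw [blockEntropy, if_neg hM]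
      simp only [hP0def, if_neg hM]
  have hceq1 : condEntropySeq p (M+1+1) = blockEntropy p (M+2) - blockEntropy p (M+1) := by
    rw [condEntropySeq]; norm_num
  have hceq2 : condEntropySeq p (M+1) = blockEntropy p (M+1) - blockEntropy p M := by
    rw [condEntropySeq]; norm_num
  rw [hceq1, hceq2, hB2, hB1, hB0]
  linarith
end

section
/- Let A be a nonempty finite set and let (p_N)_{N≥1} be a consistent family of probability mass functions on finite words over A. For N ≥ 2, let q : (Fin (N−1) → A) × A → ℝ be the marginal of p_{N+1} obtained by summing out the N-th coordinate, i.e. q(u, a) = ∑_{b ∈ A} p_{N+1}(the word u followed by b followed by a). Then conditioning on an additional symbol does not increase conditional entropy: −∑_{w : Fin (N+1) → A} p_{N+1}(w) · log( p_{N+1}(w) / p_N(w restricted to its first N coordinates) ) ≤ −∑_{w : Fin (N+1) → A} p_{N+1}(w) · log( q(w restricted to its first N−1 coordinates, last coordinate of w) / p_{N−1}(w restricted to its first N−1 coordinates) ), where summands with zero probability are taken to be 0. -/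
open Real

lemma sum_snoc_aux {A : Type*} [Fintype A] {n : ℕ} (f : (Fin (n+1) → A) → ℝ) :
    ∑ w : Fin (n+1) → A, f w = ∑ v : Fin n → A, ∑ a : A, f (Fin.snoc v a) := by
  rw [← Equiv.sum_comp (Fin.snocEquiv fun _ => A) f, Fintype.sum_prod_type]
  rw [Finset.sum_comm]
  simp [Fin.snocEquiv]

/-- For a consistent family of probability mass functions on words over a
nonempty finite alphabet and any `N ≥ 2` (written here as `N = M + 2`),
let `q(u, a) = ∑_b p_{N+1}(u ++ [b] ++ [a])` be the marginal of `p_{N+1}`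
obtained by summing out the `N`-th coordinate.  Then conditioning on an
additional symbol does not increase conditional entropy:
`-∑_w p_{N+1}(w) log (p_{N+1}(w) / p_N(first N coords of w))
  ≤ -∑_w p_{N+1}(w) log (q(first N-1 coords of w, last coord of w) /
       p_{N-1}(first N-1 coords of w))`,
where summands with zero probability are taken to be `0`. -/
theorem condEntropy_le_of_less_conditioning {A : Type*} [Fintype A] [Nonempty A]
    (p : ∀ N : ℕ, (Fin N → A) → ℝ)
    (hnonneg : ∀ N, 1 ≤ N → ∀ w : Fin N → A, 0 ≤ p N w)
    (hsum : ∀ N, 1 ≤ N → ∑ w : Fin N → A, p N w = 1)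
    (hconsistent : ∀ N, 1 ≤ N → ∀ w : Fin N → A,
      ∑ a : A, p (N + 1) (Fin.snoc w a) = p N w)
    (M : ℕ) (q : (Fin (M + 1) → A) × A → ℝ)
    (hq : ∀ (u : Fin (M + 1) → A) (a : A),
      q (u, a) = ∑ b : A, p (M + 3) (Fin.snoc (Fin.snoc u b) a)) :
    -∑ w : Fin (M + 3) → A,
        (if p (M + 3) w = 0 then 0
         else p (M + 3) w * Real.log (p (M + 3) w / p (M + 2) (Fin.init w)))
      ≤
    -∑ w : Fin (M + 3) → A,
        (if p (M + 3) w = 0 then 0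
         else p (M + 3) w *
           Real.log (q (Fin.init (Fin.init w), w (Fin.last (M + 2))) /
             p (M + 1) (Fin.init (Fin.init w)))) := by
  rw [neg_le_neg_iff]
  set g : (Fin (M + 3) → A) → ℝ := fun w =>
    q (Fin.init (Fin.init w), w (Fin.last (M + 2))) * p (M + 2) (Fin.init w) /
      p (M + 1) (Fin.init (Fin.init w)) with hg
  -- q is nonnegative
  have hqnn : ∀ u a, 0 ≤ q (u, a) := fun u a => by
    rw [hq]; exact Finset.sum_nonneg fun b _ => hnonneg _ (by omega) _
  have hgnn : ∀ w, 0 ≤ g w := fun w =>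
    div_nonneg (mul_nonneg (hqnn _ _) (hnonneg _ (by omega) _)) (hnonneg _ (by omega) _)
  -- pointwise bound
  have key : ∀ w : Fin (M + 3) → A,
      (if p (M + 3) w = 0 then 0
        else p (M + 3) w *
          Real.log (q (Fin.init (Fin.init w), w (Fin.last (M + 2))) /
            p (M + 1) (Fin.init (Fin.init w))))
      ≤ (if p (M + 3) w = 0 then 0
          else p (M + 3) w * Real.log (p (M + 3) w / p (M + 2) (Fin.init w)))
        + (if p (M + 3) w = 0 then 0 else g w - p (M + 3) w) := by
    intro w
    by_cases hp : p (M + 3) w = 0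
    · simp [hp]
    simp only [hp, if_false]
    have hp3 : 0 < p (M + 3) w := (hnonneg _ (by omega) w).lt_of_ne' hp
    have hw : Fin.snoc (Fin.init w) (w (Fin.last (M + 2))) = w := Fin.snoc_init_self w
    have hw2 : Fin.snoc (Fin.init (Fin.init w)) (Fin.init w (Fin.last (M + 1)))
        = Fin.init w := Fin.snoc_init_self (Fin.init w)
    have hp2 : 0 < p (M + 2) (Fin.init w) := by
      have hle := Finset.single_le_sum (f := fun a => p (M + 3) (Fin.snoc (Fin.init w) a))
        (fun a _ => hnonneg _ (by omega) _) (Finset.mem_univ (w (Fin.last (M + 2))))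
      simp only [hw] at hle
      exact hp3.trans_le (hle.trans_eq (hconsistent (M + 2) (by omega) (Fin.init w)))
    have hp1 : 0 < p (M + 1) (Fin.init (Fin.init w)) := by
      have hle := Finset.single_le_sum
        (f := fun a => p (M + 2) (Fin.snoc (Fin.init (Fin.init w)) a))
        (fun a _ => hnonneg _ (by omega) _) (Finset.mem_univ (Fin.init w (Fin.last (M + 1))))
      simp only [hw2] at hle
      exact hp2.trans_le (hle.trans_eq
        (hconsistent (M + 1) (by omega) (Fin.init (Fin.init w))))
    have hqpos : 0 < q (Fin.init (Fin.init w), w (Fin.last (M + 2))) := by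
      have hle := Finset.single_le_sum
        (f := fun b => p (M + 3) (Fin.snoc (Fin.snoc (Fin.init (Fin.init w)) b)
          (w (Fin.last (M + 2)))))
        (fun a _ => hnonneg _ (by omega) _) (Finset.mem_univ (Fin.init w (Fin.last (M + 1))))
      simp only [hw2, hw] at hle
      exact hp3.trans_le (hle.trans_eq (hq _ _).symm)
    set Q := q (Fin.init (Fin.init w), w (Fin.last (M + 2)))
    set P1 := p (M + 1) (Fin.init (Fin.init w))
    set P2 := p (M + 2) (Fin.init w)
    set P3 := p (M + 3) w
    have hx : 0 < Q * P2 / (P1 * P3) := by positivity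
    have hlog := Real.log_le_sub_one_of_pos hx
    have heq : Real.log (Q / P1) = Real.log (P3 / P2) + Real.log (Q * P2 / (P1 * P3)) := by
      rw [Real.log_div hqpos.ne' hp1.ne', Real.log_div hp3.ne' hp2.ne',
        Real.log_div (mul_pos hqpos hp2).ne' (mul_pos hp1 hp3).ne',
        Real.log_mul hqpos.ne' hp2.ne', Real.log_mul hp1.ne' hp3.ne']
      ring
    have hgw : g w = Q * P2 / P1 := rfl
    rw [heq, hgw, mul_add]
    have h2 : P3 * Real.log (Q * P2 / (P1 * P3)) ≤ Q * P2 / P1 - P3 := by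
      calc P3 * Real.log (Q * P2 / (P1 * P3)) ≤ P3 * (Q * P2 / (P1 * P3) - 1) :=
            mul_le_mul_of_nonneg_left hlog hp3.le
        _ = Q * P2 / P1 - P3 := by field_simp
    linarith
  -- sum of the correction term is ≤ 0
  have hsum3 : ∑ w : Fin (M + 3) → A, p (M + 3) w = 1 := hsum _ (by omega)
  have hsumg : ∑ w : Fin (M + 3) → A, g w = 1 := by
    rw [sum_snoc_aux g]
    simp only [hg, Fin.init_snoc, Fin.snoc_last]
    rw [sum_snoc_aux (fun v : Fin (M + 2) → A =>
      ∑ a : A, q (Fin.init v, a) * p (M + 2) v / p (M + 1) (Fin.init v))]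
    simp only [Fin.init_snoc]
    have huval : ∀ u : Fin (M + 1) → A,
        ∑ b : A, ∑ a : A, q (u, a) * p (M + 2) (Fin.snoc u b) / p (M + 1) u
          = p (M + 1) u := by
      intro u
      have hsb : ∑ b : A, p (M + 2) (Fin.snoc u b) = p (M + 1) u :=
        hconsistent (M + 1) (by omega) u
      have hsa : ∑ a : A, q (u, a) = p (M + 1) u := by
        have h1 : ∑ a : A, q (u, a)
            = ∑ a : A, ∑ b : A, p (M + 3) (Fin.snoc (Fin.snoc u b) a) :=
          Finset.sum_congr rfl fun a _ => hq u a
        rw [h1, Finset.sum_comm]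
        rw [Finset.sum_congr rfl fun b (_ : b ∈ Finset.univ) =>
          hconsistent (M + 2) (by omega) (Fin.snoc u b), hsb]
      rw [Finset.sum_comm]
      calc ∑ a : A, ∑ b : A, q (u, a) * p (M + 2) (Fin.snoc u b) / p (M + 1) u
          = ∑ a : A, q (u, a) * (∑ b : A, p (M + 2) (Fin.snoc u b)) / p (M + 1) u := by
            refine Finset.sum_congr rfl fun a _ => ?_
            rw [Finset.mul_sum, Finset.sum_div]
        _ = ∑ a : A, q (u, a) * (p (M + 1) u / p (M + 1) u) := by
            refine Finset.sum_congr rfl fun a _ => ?_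
            rw [hsb, mul_div_assoc]
        _ = p (M + 1) u := by
            by_cases h0 : p (M + 1) u = 0
            · rw [h0]
              refine Finset.sum_eq_zero fun a _ => ?_
              have hall := (Finset.sum_eq_zero_iff_of_nonneg
                (fun a (_ : a ∈ Finset.univ) => hqnn u a)).mp (by rw [hsa, h0])
              rw [hall a (Finset.mem_univ a), zero_mul]
            · rw [div_self h0]
              simpa using hsa
    rw [Finset.sum_congr rfl fun u (_ : u ∈ Finset.univ) => huval u, hsum _ (by omega)]
  have hcorr : ∑ w : Fin (M + 3) → A,
      (if p (M + 3) w = 0 then 0 else g w - p (M + 3) w) ≤ 0 := by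
    have h1 : ∑ w : Fin (M + 3) → A,
        (if p (M + 3) w = 0 then 0 else g w - p (M + 3) w)
        = (∑ w : Fin (M + 3) → A, (if p (M + 3) w = 0 then 0 else g w))
          - ∑ w : Fin (M + 3) → A, (if p (M + 3) w = 0 then 0 else p (M + 3) w) := by
      rw [← Finset.sum_sub_distrib]
      refine Finset.sum_congr rfl fun w _ => ?_
      by_cases hp : p (M + 3) w = 0 <;> simp [hp]
    rw [h1]
    have h2 : ∑ w : Fin (M + 3) → A, (if p (M + 3) w = 0 then 0 else g w)
        ≤ ∑ w : Fin (M + 3) → A, g w := by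
      refine Finset.sum_le_sum fun w _ => ?_
      by_cases hp : p (M + 3) w = 0 <;> simp [hp, hgnn w]
    have h3 : ∑ w : Fin (M + 3) → A, (if p (M + 3) w = 0 then 0 else p (M + 3) w)
        = 1 := by
      rw [← hsum3]
      refine Finset.sum_congr rfl fun w _ => ?_
      by_cases hp : p (M + 3) w = 0 <;> simp [hp]
    rw [h3, hsumg] at *
    linarith
  calc ∑ w : Fin (M + 3) → A,
        (if p (M + 3) w = 0 then 0
         else p (M + 3) w *
           Real.log (q (Fin.init (Fin.init w), w (Fin.last (M + 2))) /
             p (M + 1) (Fin.init (Fin.init w))))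
      ≤ ∑ w : Fin (M + 3) → A,
          ((if p (M + 3) w = 0 then 0
            else p (M + 3) w * Real.log (p (M + 3) w / p (M + 2) (Fin.init w)))
          + (if p (M + 3) w = 0 then 0 else g w - p (M + 3) w)) :=
        Finset.sum_le_sum fun w _ => key w
    _ = (∑ w : Fin (M + 3) → A,
          (if p (M + 3) w = 0 then 0
            else p (M + 3) w * Real.log (p (M + 3) w / p (M + 2) (Fin.init w))))
        + ∑ w : Fin (M + 3) → A,
            (if p (M + 3) w = 0 then 0 else g w - p (M + 3) w) :=
        Finset.sum_add_distrib
    _ ≤ _ := by linarith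
end
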